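/- arXiv:2204.13750 — 5 statements merged into one kernel-verified Lean document; each statement's English description precedes it below -/
import Mathlib

section
/- For integers n, k with 2 ≤ k ≤ n/4, the Pareto set of OneJumpZeroJump_{n,k} is exactly S* = {x ∈ {0,1}^n : |x|₁ ∈ [k..n-k] ∪ {0, n}}: a point x is Pareto optimal (no y strictly dominates x with respect to maximizing (f1,f2)) if and only if x ∈ S*. -/
/-! Write `c = |x|₁`. Both objectives depend on `c` only, through the OneJump function
`J(m) = k + m` for `m ≤ n - k` or `m = n` and `J(m) = n - m` otherwise: `f₁ = J(c)` and
`f₂ = J(n - c)`. The sum `J(c) + J(n - c)` never exceeds `n + 2k` and attains it exactly on `S*`,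
so no point weakly dominating a point of `S*` can differ from it in value. Conversely, a point
`x ∉ S*` has `0 < c < n` and lies in one of the two gaps: for `c < k` it is strictly dominated by
`1ⁿ`, whose value is `(n + k, k)`, and for `c > n - k` by `0ⁿ`, whose value is `(k, n + k)`. -/

def onesCount {n : ℕ} (x : Fin n → Bool) : ℕ :=
  (Finset.univ.filter (fun i => x i = true)).card

def zerosCount {n : ℕ} (x : Fin n → Bool) : ℕ :=
  (Finset.univ.filter (fun i => x i = false)).card

def ojzjF1 (n k : ℕ) (x : Fin n → Bool) : ℤ :=
  if onesCount x ≤ n - k ∨ x = (fun _ => true) then (k : ℤ) + onesCount x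
  else (n : ℤ) - onesCount x

def ojzjF2 (n k : ℕ) (x : Fin n → Bool) : ℤ :=
  if zerosCount x ≤ n - k ∨ x = (fun _ => false) then (k : ℤ) + zerosCount x
  else (n : ℤ) - zerosCount x

theorem strictMono_fst_add_snd {α : Type*} [AddCommMonoid α] [PartialOrder α]
    [IsOrderedCancelAddMonoid α] : StrictMono fun p : α × α => p.1 + p.2 := fun a b h => by
  rcases Prod.lt_iff.1 h with ⟨h₁, h₂⟩ | ⟨h₁, h₂⟩
  · exact add_lt_add_of_lt_of_le h₁ h₂
  · exact add_lt_add_of_le_of_lt h₁ h₂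

section Counts

variable {n : ℕ}

theorem onesCount_le (x : Fin n → Bool) : onesCount x ≤ n := by
  simpa [onesCount] using Finset.card_filter_le Finset.univ (fun i => x i = true)

@[simp] theorem onesCount_const_true : onesCount (fun _ : Fin n => true) = n := by
  simp [onesCount]

@[simp] theorem onesCount_const_false : onesCount (fun _ : Fin n => false) = 0 := by
  simp [onesCount]

theorem zerosCount_eq_sub_onesCount (x : Fin n → Bool) : zerosCount x = n - onesCount x := by
  have h := Finset.card_filter_add_card_filter_not (s := Finset.univ) (fun i => x i = true)
  simp only [Bool.not_eq_true, Finset.card_univ, Fintype.card_fin] at h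
  rw [zerosCount, onesCount]
  omega

theorem eq_const_iff_card_filter_eq (x : Fin n → Bool) (b : Bool) :
    x = (fun _ => b) ↔ (Finset.univ.filter (fun i => x i = b)).card = n := by
  simpa [funext_iff] using
    (Finset.card_filter_eq_iff (s := Finset.univ) (p := fun i => x i = b)).symm

end Counts

def oneJump (n k m : ℕ) : ℤ :=
  if m ≤ n - k ∨ m = n then (k : ℤ) + m else (n : ℤ) - m

/-- The objective vector `(f₁, f₂)` of a point with `m` ones. -/
def ojzjOfCount (n k m : ℕ) : ℤ × ℤ :=
  (oneJump n k m, oneJump n k (n - m))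

theorem ojzjF1_eq_oneJump (n k : ℕ) (x : Fin n → Bool) :
    ojzjF1 n k x = oneJump n k (onesCount x) := by
  simp only [ojzjF1, oneJump, eq_const_iff_card_filter_eq x true]
  rfl

theorem ojzjF2_eq_oneJump (n k : ℕ) (x : Fin n → Bool) :
    ojzjF2 n k x = oneJump n k (n - onesCount x) := by
  simp only [ojzjF2, oneJump, eq_const_iff_card_filter_eq x false]
  rw [← zerosCount, zerosCount_eq_sub_onesCount]

section ojzjOfCount

variable {n k m : ℕ}

theorem ojzjOfCount_sum_le (hm : m ≤ n) :
    (ojzjOfCount n k m).1 + (ojzjOfCount n k m).2 ≤ n + 2 * k := by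
  simp only [ojzjOfCount, oneJump]
  split_ifs <;> omega

theorem ojzjOfCount_sum_eq (hm : (k ≤ m ∧ m ≤ n - k) ∨ m = 0 ∨ m = n) :
    (ojzjOfCount n k m).1 + (ojzjOfCount n k m).2 = n + 2 * k := by
  simp only [ojzjOfCount, oneJump]
  split_ifs <;> omega

theorem ojzjOfCount_lt_ojzjOfCount_n (hm₀ : 0 < m) (hmk : m < k) (hmn : m < n) :
    ojzjOfCount n k m < ojzjOfCount n k n := by
  rw [Prod.lt_iff]
  simp only [ojzjOfCount, oneJump, or_true, ↓reduceIte]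
  split_ifs <;> omega

theorem ojzjOfCount_lt_ojzjOfCount_zero (hm : n - k < m) (hmn : m < n) :
    ojzjOfCount n k m < ojzjOfCount n k 0 := by
  rw [Prod.lt_iff]
  simp only [ojzjOfCount, oneJump]
  split_ifs <;> omega

end ojzjOfCount

theorem stmt_1_general (n k : ℕ) (x : Fin n → Bool) :
    (¬ ∃ y : Fin n → Bool,
        (ojzjF1 n k x ≤ ojzjF1 n k y ∧ ojzjF2 n k x ≤ ojzjF2 n k y) ∧
        (ojzjF1 n k y, ojzjF2 n k y) ≠ (ojzjF1 n k x, ojzjF2 n k x))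
      ↔ (k ≤ onesCount x ∧ onesCount x ≤ n - k) ∨ onesCount x = 0 ∨ onesCount x = n := by
  have hdom (y : Fin n → Bool) :
      ((ojzjF1 n k x ≤ ojzjF1 n k y ∧ ojzjF2 n k x ≤ ojzjF2 n k y) ∧
        (ojzjF1 n k y, ojzjF2 n k y) ≠ (ojzjF1 n k x, ojzjF2 n k x)) ↔
      ojzjOfCount n k (onesCount x) < ojzjOfCount n k (onesCount y) := by
    simp only [ojzjF1_eq_oneJump, ojzjF2_eq_oneJump, ← Prod.mk_le_mk, ne_comm,
      ← lt_iff_le_and_ne, ojzjOfCount]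
  simp only [hdom]
  constructor
  · intro hopt
    by_contra hx
    have hxn := onesCount_le x
    rcases Nat.lt_or_ge (onesCount x) k with hlow | hhigh
    · exact hopt ⟨fun _ => true, by
        simpa using ojzjOfCount_lt_ojzjOfCount_n (by omega) hlow (by omega)⟩
    · exact hopt ⟨fun _ => false, by
        simpa using ojzjOfCount_lt_ojzjOfCount_zero (by omega) (by omega)⟩
  · rintro hx ⟨y, hlt⟩
    exact ((ojzjOfCount_sum_le (onesCount_le y)).trans_eq (ojzjOfCount_sum_eq hx).symm).not_gt
      (strictMono_fst_add_snd hlt)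

/-- The Pareto set of OneJumpZeroJump_{n,k} is exactly
`S* = {x : |x|₁ ∈ [k..n-k] ∪ {0, n}}`. -/
theorem stmt_1 (n k : ℕ) (hk2 : 2 ≤ k) (hk : 4 * k ≤ n) (x : Fin n → Bool) :
    (¬ ∃ y : Fin n → Bool,
        (ojzjF1 n k x ≤ ojzjF1 n k y ∧ ojzjF2 n k x ≤ ojzjF2 n k y) ∧
        (ojzjF1 n k y, ojzjF2 n k y) ≠ (ojzjF1 n k x, ojzjF2 n k x))
      ↔ (k ≤ onesCount x ∧ onesCount x ≤ n - k) ∨ onesCount x = 0 ∨ onesCount x = n :=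
  stmt_1_general n k x
end

section
/- Let 2 ≤ k ≤ n/4. Every point x ∈ {0,1}^n in the inner Pareto set S_I* = {x : k ≤ |x|₁ ≤ n-k} strictly dominates (with respect to maximizing (f1,f2) of OneJumpZeroJump_{n,k}) every point y with 1 ≤ |y|₁ ≤ k-1 or n-k+1 ≤ |y|₁ ≤ n-1. -/
/-!
On the inner set both objectives are on their increasing branches, so `x` scores
`k + |x|₁` and `k + |x|₀ ≥ k`. A point `y` with `1 ≤ |y|₁ < k` has fewer ones, hence a smaller
`f1`, and sits in the jump of `f2`, where it scores only `n - |y|₀ = |y|₁ < k`. Complementing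
all bits swaps `f1` and `f2`, which reduces the other gap to this one.
-/

section OneJumpZeroJump

variable {n : ℕ}

theorem onesCount_add_zerosCount (x : Fin n → Bool) : onesCount x + zerosCount x = n := by
  simpa [onesCount, zerosCount] using
    Finset.card_filter_add_card_filter_not (s := Finset.univ) (p := fun i => x i = true)

theorem ne_const_false_of_one_le_onesCount {y : Fin n → Bool} (h : 1 ≤ onesCount y) :
    y ≠ fun _ => false := by
  rintro rfl
  simp [onesCount] at h

theorem onesCount_not (x : Fin n → Bool) : onesCount (fun i => !x i) = zerosCount x := by
  simp [onesCount, zerosCount]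

theorem zerosCount_not (x : Fin n → Bool) : zerosCount (fun i => !x i) = onesCount x := by
  simp [onesCount, zerosCount]

theorem ojzjF1_not (k : ℕ) (x : Fin n → Bool) :
    ojzjF1 n k (fun i => !x i) = ojzjF2 n k x := by
  simp [ojzjF1, ojzjF2, onesCount_not, funext_iff]

theorem ojzjF2_not (k : ℕ) (x : Fin n → Bool) :
    ojzjF2 n k (fun i => !x i) = ojzjF1 n k x := by
  simp [ojzjF1, ojzjF2, zerosCount_not, funext_iff]

theorem ojzjF1_of_onesCount_le {k : ℕ} {x : Fin n → Bool} (h : onesCount x ≤ n - k) :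
    ojzjF1 n k x = k + onesCount x :=
  if_pos (Or.inl h)

theorem ojzjF2_of_zerosCount_le {k : ℕ} {x : Fin n → Bool} (h : zerosCount x ≤ n - k) :
    ojzjF2 n k x = k + zerosCount x :=
  if_pos (Or.inl h)

theorem ojzjF2_of_lt_zerosCount {k : ℕ} {x : Fin n → Bool} (h : n - k < zerosCount x)
    (hx : x ≠ fun _ => false) : ojzjF2 n k x = n - zerosCount x :=
  if_neg (not_or.mpr ⟨h.not_ge, hx⟩)

theorem ojzjF_lt_of_onesCount_lt {k : ℕ} {x y : Fin n → Bool}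
    (hx₁ : k ≤ onesCount x) (hx₂ : onesCount x ≤ n - k)
    (hy₁ : 1 ≤ onesCount y) (hy₂ : onesCount y < k) :
    ojzjF1 n k y < ojzjF1 n k x ∧ ojzjF2 n k y < ojzjF2 n k x := by
  have hxn := onesCount_add_zerosCount x
  have hyn := onesCount_add_zerosCount y
  rw [ojzjF1_of_onesCount_le hx₂, ojzjF1_of_onesCount_le (by omega),
    ojzjF2_of_zerosCount_le (x := x) (by omega),
    ojzjF2_of_lt_zerosCount (by omega) (ne_const_false_of_one_le_onesCount hy₁)]
  omega

end OneJumpZeroJump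

theorem stmt_2_general (n k : ℕ)
    (x y : Fin n → Bool)
    (hx : k ≤ onesCount x ∧ onesCount x ≤ n - k)
    (hy : (1 ≤ onesCount y ∧ onesCount y ≤ k - 1) ∨
          (n - k + 1 ≤ onesCount y ∧ onesCount y ≤ n - 1)) :
    ojzjF1 n k y ≤ ojzjF1 n k x ∧ ojzjF2 n k y ≤ ojzjF2 n k x ∧
      (ojzjF1 n k y < ojzjF1 n k x ∨ ojzjF2 n k y < ojzjF2 n k x) := by
  obtain ⟨hx₁, hx₂⟩ := hx
  rcases hy with ⟨hy₁, hy₂⟩ | ⟨hy₁, hy₂⟩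
  · obtain ⟨h₁, h₂⟩ := ojzjF_lt_of_onesCount_lt hx₁ hx₂ hy₁ (by omega)
    exact ⟨h₁.le, h₂.le, Or.inl h₁⟩
  · have hxn := onesCount_add_zerosCount x
    have hyn := onesCount_add_zerosCount y
    obtain ⟨h₂, h₁⟩ := ojzjF_lt_of_onesCount_lt (k := k) (x := fun i => !x i) (y := fun i => !y i)
      (by rw [onesCount_not]; omega) (by rw [onesCount_not]; omega)
      (by rw [onesCount_not]; omega) (by rw [onesCount_not]; omega)
    simp only [ojzjF1_not, ojzjF2_not] at h₁ h₂
    exact ⟨h₁.le, h₂.le, Or.inr h₂⟩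

/-- Every point of the inner Pareto set strictly dominates every point in the gap
regions (with between 1 and k-1 zeroes or ones). -/
theorem stmt_2 (n k : ℕ) (hk2 : 2 ≤ k) (hk : 4 * k ≤ n)
    (x y : Fin n → Bool)
    (hx : k ≤ onesCount x ∧ onesCount x ≤ n - k)
    (hy : (1 ≤ onesCount y ∧ onesCount y ≤ k - 1) ∨
          (n - k + 1 ≤ onesCount y ∧ onesCount y ≤ n - 1)) :
    ojzjF1 n k y ≤ ojzjF1 n k x ∧ ojzjF2 n k y ≤ ojzjF2 n k x ∧
      (ojzjF1 n k y < ojzjF1 n k x ∨ ojzjF2 n k y < ojzjF2 n k x) :=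
  stmt_2_general n k x y hx hy
end

section
/- For integers n, k, i with 0 ≤ i < k ≤ n/4 and n ≥ 2, the probability that standard bit-wise mutation with rate 1/n applied to a bit string with i one-bits produces a string with exactly k one-bits, by flipping exactly k - i zero-bits and no other bits, is at least (1/e)·(3/(4k))^k. Formally: C(n-i, k-i)·(1/n)^{k-i}·(1-1/n)^{n-(k-i)} ≥ (1/e)·(3/(4k))^k. -/
/-!
Write `j = k - i`. The binomial factor is bounded below by `Nat.pow_le_choose`:
`C(n-i, j) / n^j ≥ ((n+1-k)/n)^j / j! ≥ (3/4)^j / j! ≥ (3/(4j))^j ≥ (3/(4k))^k`,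
using `4k ≤ n` and `j! ≤ j^j`. The remaining factor satisfies
`(1 - 1/n)^(n-j) ≥ (1 - 1/n)^(n-1) = (1 + 1/(n-1))^{-(n-1)} ≥ 1/e`.
-/

open Nat Real

theorem one_div_exp_one_le_one_sub_one_div_succ_pow (m : ℕ) :
    1 / exp 1 ≤ (1 - 1 / (m + 1 : ℝ)) ^ m := by
  rcases m.eq_zero_or_pos with rfl | _
  · simpa using inv_le_one_of_one_le₀ (one_le_exp zero_le_one)
  have hinv : 1 - 1 / (m + 1 : ℝ) = (1 + (m : ℝ)⁻¹)⁻¹ := by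
    field_simp
    ring
  rw [hinv, inv_pow, one_div]
  exact inv_anti₀ (by positivity) one_add_inv_pow_le_exp

theorem one_div_exp_one_le_one_sub_one_div_pow {m n : ℕ} (hmn : m < n) :
    1 / exp 1 ≤ (1 - 1 / (n : ℝ)) ^ m := by
  obtain ⟨l, rfl⟩ := Nat.exists_eq_add_of_lt hmn
  have hq0 : 0 ≤ 1 - 1 / ((m + l + 1 : ℕ) : ℝ) := by
    rw [sub_nonneg, div_le_one (by positivity)]
    exact_mod_cast Nat.succ_pos _
  have hq1 : 1 - 1 / ((m + l + 1 : ℕ) : ℝ) ≤ 1 := sub_le_self _ (by positivity)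
  calc 1 / exp 1 ≤ (1 - 1 / ((m + l : ℕ) + 1 : ℝ)) ^ (m + l) :=
        one_div_exp_one_le_one_sub_one_div_succ_pow _
    _ = (1 - 1 / ((m + l + 1 : ℕ) : ℝ)) ^ (m + l) := by push_cast; rfl
    _ ≤ _ := pow_le_pow_of_le_one hq0 hq1 (Nat.le_add_right m l)

theorem div_natCast_pow_self_le_of_le {c : ℝ} (hc0 : 0 ≤ c) (hc1 : c ≤ 1) {j k : ℕ}
    (hjk : j ≤ k) : (c / k) ^ k ≤ (c / j) ^ j := by
  have hck : c / k ≤ 1 := by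
    rcases k.eq_zero_or_pos with rfl | hk
    · simp
    · exact div_le_one_of_le₀ (hc1.trans (by exact_mod_cast hk)) (Nat.cast_nonneg k)
  rcases j.eq_zero_or_pos with rfl | hj
  · simpa using pow_le_one₀ (by positivity) hck
  have hjR : (0 : ℝ) < j := by exact_mod_cast hj
  have hjkR : (j : ℝ) ≤ k := by exact_mod_cast hjk
  calc (c / k) ^ k ≤ (c / k) ^ j := pow_le_pow_of_le_one (by positivity) hck hjk
    _ ≤ (c / j) ^ j := by gcongr

theorem div_natCast_pow_self_le_pow_div_factorial {c : ℝ} (hc : 0 ≤ c) (j : ℕ) :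
    (c / j) ^ j ≤ c ^ j / j ! := by
  rw [div_pow]
  exact div_le_div_of_nonneg_left (by positivity) (by positivity)
    (by exact_mod_cast Nat.factorial_le_pow j)

theorem pow_div_factorial_le_choose_mul_one_div_pow {c : ℝ} (hc : 0 ≤ c) {m j n : ℕ}
    (hn : 0 < n) (h : c * n ≤ (m + 1 - j : ℕ)) :
    c ^ j / j ! ≤ m.choose j * (1 / (n : ℝ)) ^ j := by
  have hnR : (0 : ℝ) < n := by exact_mod_cast hn
  have hc' : c ≤ (m + 1 - j : ℕ) / n := (le_div_iff₀ hnR).mpr h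
  calc c ^ j / j ! ≤ (((m + 1 - j : ℕ) : ℝ) / n) ^ j / j ! := by gcongr
    _ = ((m + 1 - j : ℕ) ^ j : ℝ) / j ! * (1 / (n : ℝ)) ^ j := by ring
    _ ≤ m.choose j * (1 / (n : ℝ)) ^ j := by gcongr; exact Nat.pow_le_choose j m

theorem stmt_3_general (n k i : ℕ) (hi : i < k) (hk : 4 * k ≤ n) :
    (1 / Real.exp 1) * (3 / (4 * (k : ℝ))) ^ k ≤
      ((n - i).choose (k - i) : ℝ) * (1 / (n : ℝ)) ^ (k - i) *
        (1 - 1 / (n : ℝ)) ^ (n - (k - i)) := by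
  have hn : 0 < n := by omega
  have hspread : 3 / 4 * (n : ℝ) ≤ (n - i + 1 - (k - i) : ℕ) := by
    rw [show n - i + 1 - (k - i) = n + 1 - k by omega, Nat.cast_sub (by omega)]
    push_cast
    linarith [show (4 * k : ℝ) ≤ n by exact_mod_cast hk]
  have hbinom : (3 / (4 * (k : ℝ))) ^ k ≤ ((n - i).choose (k - i) : ℝ) * (1 / (n : ℝ)) ^ (k - i) :=
    calc (3 / (4 * (k : ℝ))) ^ k = (3 / 4 / k) ^ k := by ring
      _ ≤ (3 / 4 / (k - i : ℕ)) ^ (k - i) :=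
        div_natCast_pow_self_le_of_le (by norm_num) (by norm_num) (Nat.sub_le k i)
      _ ≤ (3 / 4) ^ (k - i) / (k - i)! := div_natCast_pow_self_le_pow_div_factorial (by norm_num) _
      _ ≤ _ := pow_div_factorial_le_choose_mul_one_div_pow (by norm_num) hn hspread
  rw [mul_comm (1 / exp 1)]
  exact mul_le_mul hbinom (one_div_exp_one_le_one_sub_one_div_pow (by omega))
    (by positivity) (by positivity)

/-- The probability that bit-wise mutation with rate 1/n turns a string with
`i < k` one-bits into one with exactly `k` one-bits (flipping exactly `k - i`
zero-bits and nothing else) is at least `(1/e)·(3/(4k))^k`. -/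
theorem stmt_3 (n k i : ℕ) (hi : i < k) (hk : 4 * k ≤ n) (hn : 2 ≤ n) :
    (1 / Real.exp 1) * (3 / (4 * (k : ℝ))) ^ k ≤
      ((n - i).choose (k - i) : ℝ) * (1 / (n : ℝ)) ^ (k - i) *
        (1 - 1 / (n : ℝ)) ^ (n - (k - i)) :=
  stmt_3_general n k i hi hk
end

section
/- For integers n, k, i with n - k < i ≤ n and k ≤ n/4, the probability that bit-wise mutation with rate 1/n turns a string with i one-bits into one with exactly n-k one-bits by flipping exactly i-(n-k) one-bits is C(i, i-(n-k))·(1/n)^{i-(n-k)}·(1-1/n)^{n-(i-(n-k))} ≥ (1/e)·(3/(4k))^k. -/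
/-!
Flipping exactly `j = i - (n - k)` of the `i` one-bits has probability
`C(i, j) (1/n)^j (1 - 1/n)^(n - j)`. Since `C(i, j) ≥ (i/j)^j` and `i/n ≥ 3/4`, the first two
factors are at least `(3/(4j))^j ≥ (3/(4k))^k`, using `1 ≤ j ≤ k`. The last factor is at least
`(1 - 1/n)^(n - 1) ≥ 1/e`.
-/

open Real Nat

theorem Nat.pow_mul_factorial_le_descFactorial_mul_pow {n k : ℕ} (hk : k ≤ n) :
    n ^ k * k ! ≤ n.descFactorial k * k ^ k :=
  calc n ^ k * k !
      = ∏ m ∈ Finset.range k, n * (k - m) := by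
        rw [Finset.prod_mul_distrib, Finset.prod_const, Finset.card_range,
          ← Nat.descFactorial_eq_prod_range, Nat.descFactorial_self]
    _ ≤ ∏ m ∈ Finset.range k, (n - m) * k := by
        refine Finset.prod_le_prod' fun m _ => ?_
        rw [Nat.mul_sub, Nat.sub_mul, Nat.mul_comm m k]
        exact Nat.sub_le_sub_left (Nat.mul_le_mul_right m hk) _
    _ = n.descFactorial k * k ^ k := by
        rw [Finset.prod_mul_distrib, Finset.prod_const, Finset.card_range,
          ← Nat.descFactorial_eq_prod_range]

theorem Nat.div_pow_le_choose {α : Type*} [Field α] [LinearOrder α] [IsStrictOrderedRing α]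
    {n k : ℕ} (hk : k ≤ n) : ((n : α) / k) ^ k ≤ n.choose k := by
  rcases k.eq_zero_or_pos with rfl | hk₀
  · simp
  have key : ((n ^ k * k ! : ℕ) : α) ≤ ((k ! * n.choose k * k ^ k : ℕ) : α) := by
    rw [← Nat.descFactorial_eq_factorial_mul_choose]
    exact_mod_cast Nat.pow_mul_factorial_le_descFactorial_mul_pow hk
  push_cast at key
  rw [div_pow, div_le_iff₀ (by positivity)]
  nlinarith [(by positivity : (0 : α) < k !)]

theorem inv_exp_one_le_one_sub_inv_pow_pred (n : ℕ) : (exp 1)⁻¹ ≤ (1 - 1 / (n : ℝ)) ^ (n - 1) := by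
  rcases le_or_gt n 1 with hn | hn
  · rw [Nat.sub_eq_zero_of_le hn, pow_zero]
    exact inv_le_one_of_one_le₀ (one_le_exp zero_le_one)
  obtain ⟨m, rfl⟩ : ∃ m, n = m + 1 := ⟨n - 1, by omega⟩
  have hm : (m : ℝ) ≠ 0 := by exact_mod_cast (by omega : m ≠ 0)
  -- `1 - 1/(m + 1) = (1 + 1/m)⁻¹`, and `(1 + 1/m)^m ≤ e`
  have hbase : 1 - 1 / ((m + 1 : ℕ) : ℝ) = (1 + (m : ℝ)⁻¹)⁻¹ := by
    push_cast
    field_simp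
    ring
  rw [hbase, inv_pow, Nat.add_sub_cancel]
  exact inv_anti₀ (by positivity) one_add_inv_pow_le_exp

theorem div_pow_self_le_div_pow_self {c : ℝ} {j k : ℕ} (hc : 0 ≤ c) (hcj : c ≤ j) (hj : 0 < j)
    (hjk : j ≤ k) : (c / k) ^ k ≤ (c / j) ^ j := by
  have hjk' : (j : ℝ) ≤ k := by exact_mod_cast hjk
  have hj' : (0 : ℝ) < j := by exact_mod_cast hj
  calc (c / k) ^ k ≤ (c / k) ^ j :=
        pow_le_pow_of_le_one (by positivity) (div_le_one_of_le₀ (hcj.trans hjk') (by positivity)) hjk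
    _ ≤ (c / j) ^ j := by gcongr

theorem div_pow_le_choose_mul_inv_pow {c : ℝ} {i j n : ℕ} (hji : j ≤ i) (hn : 0 < n)
    (hcn : c * n ≤ i) (hc : 0 ≤ c) : (c / j) ^ j ≤ i.choose j * (1 / (n : ℝ)) ^ j := by
  have hn' : (0 : ℝ) < n := by exact_mod_cast hn
  calc (c / j) ^ j ≤ ((i : ℝ) / n / j) ^ j := by
        gcongr
        rwa [le_div_iff₀ hn']
    _ = ((i : ℝ) / j) ^ j * (1 / n) ^ j := by rw [← mul_pow]; ring
    _ ≤ i.choose j * (1 / (n : ℝ)) ^ j := by gcongr; exact Nat.div_pow_le_choose hji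

/-- The probability that bit-wise mutation with rate 1/n turns a string with
`i > n-k` one-bits into one with exactly `n-k` one-bits (flipping exactly
`i-(n-k)` one-bits and nothing else) is at least `(1/e)·(3/(4k))^k`. -/
theorem stmt_17 (n k i : ℕ) (hk : 4 * k ≤ n) (hi1 : n - k < i) (hi2 : i ≤ n) :
    (1 / Real.exp 1) * (3 / (4 * (k : ℝ))) ^ k ≤
      (i.choose (i - (n - k)) : ℝ) * (1 / (n : ℝ)) ^ (i - (n - k)) *
        (1 - 1 / (n : ℝ)) ^ (n - (i - (n - k))) := by
  set j := i - (n - k)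
  obtain ⟨hj₀, hjk, hji⟩ : 0 < j ∧ j ≤ k ∧ j ≤ i := by omega
  have hj₁ : (1 : ℝ) ≤ j := by exact_mod_cast hj₀
  have hn : 1 ≤ n := by omega
  have hin : (3 / 4 : ℝ) * n ≤ i := by
    have : (3 : ℝ) * n ≤ 4 * i := by exact_mod_cast (by omega : 3 * n ≤ 4 * i)
    linarith
  have hflip : (3 / (4 * (k : ℝ))) ^ k ≤ i.choose j * (1 / (n : ℝ)) ^ j :=
    calc (3 / (4 * (k : ℝ))) ^ k = (3 / 4 / (k : ℝ)) ^ k := by rw [div_div]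
      _ ≤ (3 / 4 / (j : ℝ)) ^ j :=
          div_pow_self_le_div_pow_self (by norm_num) (by linarith) hj₀ hjk
      _ ≤ i.choose j * (1 / (n : ℝ)) ^ j :=
          div_pow_le_choose_mul_inv_pow hji hn hin (by norm_num)
  have hinv : 1 / (n : ℝ) ≤ 1 := div_le_one_of_le₀ (by exact_mod_cast hn) (by positivity)
  have hstay : 1 / exp 1 ≤ (1 - 1 / (n : ℝ)) ^ (n - j) :=
    calc 1 / exp 1 = (exp 1)⁻¹ := one_div _
      _ ≤ (1 - 1 / (n : ℝ)) ^ (n - 1) := inv_exp_one_le_one_sub_inv_pow_pred n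
      _ ≤ (1 - 1 / (n : ℝ)) ^ (n - j) :=
          pow_le_pow_of_le_one (sub_nonneg.2 hinv) (sub_le_self _ (by positivity)) (by omega)
  rw [mul_comm]
  exact mul_le_mul hflip hstay (by positivity) (by positivity)
end

section
/- In a sorted list S₁,...,S_m of rank-1 individuals by ascending f1-value used for crowding distance computation, if indices a ≤ b satisfy [a..b] = {i : f1(S_i) = w} for some value w with a > 1 and b < m, then the crowding-distance contribution of S_a in objective f1, defined as (f1(S_{a+1}) - f1(S_{a-1}))/(f1(S_m) - f1(S_1)), is strictly positive, while for every i with a < i < b this contribution for S_i is zero. Consequently, for each objective value attained by rank-1 individuals, at most 2 individuals per objective (hence at most 4 total over two objectives) sharing that value have positive crowding distance. -/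
/-- In a sorted (by f-value, ascending, indices 1..m) list of rank-1
individuals, if `[a..b]` with `1 < a ≤ b < m` is exactly the set of indices of
value `w`, then the crowding-distance contribution
`(f(S_{a+1}) - f(S_{a-1}))/(f(S_m) - f(S_1))` of `S_a` is strictly positive,
while this contribution is zero for every `i` with `a < i < b`; consequently at
most 2 individuals of that value have positive contribution in this objective. -/
theorem stmt_19 (m : ℕ) (f : ℕ → ℝ)
    (hsort : ∀ i j, 1 ≤ i → i ≤ j → j ≤ m → f i ≤ f j)
    (hrange : f 1 < f m)
    (a b : ℕ) (w : ℝ) (ha : 1 < a) (hb : b < m) (hab : a ≤ b)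
    (hval : ∀ i, 1 ≤ i → i ≤ m → (f i = w ↔ a ≤ i ∧ i ≤ b)) :
    0 < (f (a + 1) - f (a - 1)) / (f m - f 1) ∧
      (∀ i, a < i → i < b → (f (i + 1) - f (i - 1)) / (f m - f 1) = 0) ∧
      ((Finset.Icc a b).filter
          (fun i => 0 < (f (i + 1) - f (i - 1)) / (f m - f 1))).card ≤ 2 := by
  have hbm : b ≤ m := le_of_lt hb
  have ham : a ≤ m := le_trans hab hbm
  have hden : 0 < f m - f 1 := sub_pos.mpr hrange
  have hfa : f a = w := (hval a (le_of_lt ha) ham).mpr ⟨le_refl a, hab⟩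
  have hfa1 : f (a - 1) < w := by
    have h1 : 1 ≤ a - 1 := Nat.le_sub_one_of_lt ha
    have h2 : a - 1 ≤ m := le_trans (Nat.sub_le a 1) ham
    have hle : f (a - 1) ≤ f a := hsort (a - 1) a h1 (Nat.sub_le a 1) ham
    have hne : f (a - 1) ≠ w := by
      intro h
      have := (hval (a - 1) h1 h2).mp h
      omega
    rw [hfa] at hle
    exact lt_of_le_of_ne hle hne
  have hfa2 : w ≤ f (a + 1) := by
    have := hsort a (a + 1) (le_of_lt ha) (Nat.le_succ a) (by omega)
    rw [hfa] at this; exact this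
  have hpos : 0 < (f (a + 1) - f (a - 1)) / (f m - f 1) :=
    div_pos (by linarith) hden
  have hzero : ∀ i, a < i → i < b → (f (i + 1) - f (i - 1)) / (f m - f 1) = 0 := by
    intro i hai hib
    have h1 : f (i - 1) = w := (hval (i - 1) (by omega) (by omega)).mpr ⟨by omega, by omega⟩
    have h2 : f (i + 1) = w := (hval (i + 1) (by omega) (by omega)).mpr ⟨by omega, by omega⟩
    rw [h1, h2, sub_self, zero_div]
  refine ⟨hpos, hzero, ?_⟩
  have hsub : (Finset.Icc a b).filter
      (fun i => 0 < (f (i + 1) - f (i - 1)) / (f m - f 1)) ⊆ {a, b} := by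
    intro i hi
    simp only [Finset.mem_filter, Finset.mem_Icc] at hi
    simp only [Finset.mem_insert, Finset.mem_singleton]
    by_contra h
    push_neg at h
    have : a < i := lt_of_le_of_ne hi.1.1 (Ne.symm h.1)
    have : i < b := lt_of_le_of_ne hi.1.2 h.2
    have := hzero i ‹a < i› ‹i < b›
    linarith [hi.2]
  calc _ ≤ ({a, b} : Finset ℕ).card := Finset.card_le_card hsub
    _ ≤ 2 := Finset.card_insert_le a {b} |>.trans (by simp)
end
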